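/- Under the assumptions of the CACE identity, the complier average causal effect equals (E[Y | Z=1] − E[Y | Z=0]) / (E[D | Z=1] − E[D | Z=0]), provided the denominator is nonzero. -/

import Mathlib

open scoped Classical
open Finset

noncomputable def Pr {Ω : Type*} [Fintype Ω] (p : Ω → ℝ) (A : Ω → Prop) : ℝ :=
  ∑ ω, if A ω then p ω else 0

noncomputable def CE {Ω : Type*} [Fintype Ω] (p : Ω → ℝ) (f : Ω → ℝ) (A : Ω → Prop) : ℝ :=
  (∑ ω, if A ω then p ω * f ω else 0) / Pr p A

noncomputable def Ex {Ω : Type*} [Fintype Ω] (p : Ω → ℝ) (f : Ω → ℝ) : ℝ :=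
  ∑ ω, p ω * f ω

/-! Randomization makes `Z` independent of the unit's whole "type" `T ω` (compliance behaviour and
potential outcomes), so each arm's conditional mean of a function of `T` is its unconditional mean:
`E[Y | Z = z] = E[Y(z, D(z))]` and `E[D | Z = z] = E[D(z)]`. The two intention-to-treat contrasts
are therefore `E[Y(1, D(1)) - Y(0, D(0))]` and `E[D(1) - D(0)]`. Under monotonicity every
non-complier has `D(0) = D(1)`, so by the exclusion restriction it contributes nothing to the first
contrast, and it contributes nothing to the second either; the second contrast is `P(complier)` and
the first is the complier-restricted sum whose quotient by `P(complier)` is the CACE. -/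

section IntentionToTreat

variable {Ω α : Type*} [Fintype Ω] (p : Ω → ℝ)

theorem sum_ite_mul_comp_eq_sum_image (B : Ω → Prop) (T : Ω → α) (F : α → ℝ) :
    (∑ ω, if B ω then p ω * F (T ω) else 0) =
      ∑ v ∈ univ.image T, F v * Pr p (fun ω => B ω ∧ T ω = v) := by
  rw [← sum_fiberwise_of_maps_to (t := univ.image T) (g := T)
    (fun ω _ => mem_image_of_mem T (mem_univ ω))]
  refine sum_congr rfl fun v _ => ?_
  rw [Pr, mul_sum, sum_filter]
  refine sum_congr rfl fun ω _ => ?_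
  by_cases hT : T ω = v <;> by_cases hB : B ω <;> simp [hT, hB, mul_comm]

theorem Ex_comp_eq_sum_image (T : Ω → α) (F : α → ℝ) :
    Ex p (fun ω => F (T ω)) = ∑ v ∈ univ.image T, F v * Pr p (fun ω => T ω = v) := by
  simpa [Ex] using sum_ite_mul_comp_eq_sum_image p (fun _ => True) T F

theorem sum_ite_mul_comp_eq_Pr_mul_Ex {B : Ω → Prop} {T : Ω → α}
    (hind : ∀ A : α → Prop, Pr p (fun ω => B ω ∧ A (T ω)) = Pr p B * Pr p (fun ω => A (T ω)))
    (F : α → ℝ) :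
    (∑ ω, if B ω then p ω * F (T ω) else 0) = Pr p B * Ex p (fun ω => F (T ω)) := by
  rw [sum_ite_mul_comp_eq_sum_image, Ex_comp_eq_sum_image, mul_sum]
  refine sum_congr rfl fun v _ => ?_
  rw [hind (· = v)]
  ring

theorem CE_comp_eq_Ex_of_indep {B : Ω → Prop} {T : Ω → α} (hB : Pr p B ≠ 0)
    (hind : ∀ A : α → Prop, Pr p (fun ω => B ω ∧ A (T ω)) = Pr p B * Pr p (fun ω => A (T ω)))
    (F : α → ℝ) :
    CE p (fun ω => F (T ω)) B = Ex p (fun ω => F (T ω)) := by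
  rw [CE, sum_ite_mul_comp_eq_Pr_mul_Ex p hind, mul_div_cancel_left₀ _ hB]

theorem CE_congr {f g : Ω → ℝ} {B : Ω → Prop} (h : ∀ ω, B ω → f ω = g ω) :
    CE p f B = CE p g B := by
  unfold CE
  congr 1
  exact sum_congr rfl fun ω _ => by split_ifs with hB <;> simp [h ω, hB]

theorem Ex_sub_Ex_eq_sum_ite {f g : Ω → ℝ} {C : Ω → Prop} (h : ∀ ω, ¬ C ω → f ω = g ω) :
    Ex p f - Ex p g = ∑ ω, if C ω then p ω * (f ω - g ω) else 0 := by
  rw [Ex, Ex, ← sum_sub_distrib]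
  exact sum_congr rfl fun ω _ => by split_ifs with hC <;> simp [h ω, hC, mul_sub]

theorem Pr_eq_true_add_Pr_eq_false (Z : Ω → Bool) :
    Pr p (fun ω => Z ω = true) + Pr p (fun ω => Z ω = false) = ∑ ω, p ω := by
  rw [Pr, Pr, ← sum_add_distrib]
  exact sum_congr rfl fun ω _ => by cases Z ω <;> simp

end IntentionToTreat

theorem eq_of_not_complier {d₀ d₁ : Bool} (hmono : d₀ = true → d₁ = true)
    (h : ¬ (d₀ = false ∧ d₁ = true)) : d₀ = d₁ := by
  cases d₀ <;> cases d₁ <;> simp_all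

theorem stmt3_general {Ω : Type*} [Fintype Ω] (p : Ω → ℝ)
    (hsum : ∑ ω, p ω = 1)
    (Z : Ω → Bool) (D : Bool → Ω → Bool) (Y : Bool → Bool → Ω → ℝ)
    (Yobs : Ω → ℝ) (Dobs : Ω → Bool)
    (hZ1 : 0 < Pr p (fun ω => Z ω = true))
    (hZ0 : Pr p (fun ω => Z ω = true) < 1)
    -- randomization: `Z` independent of the joint potential outcomes/compliance map
    (hind : ∀ (b : Bool)
      (A : ((Bool → Bool) × (Bool → Bool → ℝ)) → Prop),
      Pr p (fun ω => Z ω = b ∧ A (fun z => D z ω, fun z d => Y z d ω)) =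
        Pr p (fun ω => Z ω = b) *
          Pr p (fun ω => A (fun z => D z ω, fun z d => Y z d ω)))
    (hmono : ∀ ω, D false ω = true → D true ω = true)
    (hexcl : ∀ ω, D false ω = D true ω →
      Y true (D true ω) ω = Y false (D false ω) ω)
    (hYobs : ∀ ω, Yobs ω = Y (Z ω) (D (Z ω) ω) ω)
    (hDobs : ∀ ω, Dobs ω = D (Z ω) ω) :
    CE p (fun ω => Y true (D true ω) ω - Y false (D false ω) ω)
        (fun ω => D false ω = false ∧ D true ω = true) =
      (CE p Yobs (fun ω => Z ω = true) - CE p Yobs (fun ω => Z ω = false)) /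
        (CE p (fun ω => if Dobs ω then (1:ℝ) else 0) (fun ω => Z ω = true) -
         CE p (fun ω => if Dobs ω then (1:ℝ) else 0) (fun ω => Z ω = false)) := by
  have hZ : ∀ b, Pr p (fun ω => Z ω = b) ≠ 0 := by
    have := Pr_eq_true_add_Pr_eq_false p Z
    intro b; cases b <;> linarith
  have arm : ∀ b (F : (Bool → Bool) × (Bool → Bool → ℝ) → ℝ),
      CE p (fun ω => F (fun z => D z ω, fun z d => Y z d ω)) (fun ω => Z ω = b) =
        Ex p (fun ω => F (fun z => D z ω, fun z d => Y z d ω)) :=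
    fun b => CE_comp_eq_Ex_of_indep p (hZ b) (hind b)
  have hY : ∀ b, CE p Yobs (fun ω => Z ω = b) = Ex p (fun ω => Y b (D b ω) ω) := fun b => by
    rw [CE_congr p (fun ω (hω : Z ω = b) => by rw [hYobs, hω])]
    exact arm b fun t => t.2 b (t.1 b)
  have hD : ∀ b, CE p (fun ω => if Dobs ω then (1:ℝ) else 0) (fun ω => Z ω = b) =
      Ex p (fun ω => if D b ω then 1 else 0) := fun b => by
    rw [CE_congr p (fun ω (hω : Z ω = b) => by rw [hDobs, hω])]
    exact arm b fun t => if t.1 b then 1 else 0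
  have noncomplier := fun ω => eq_of_not_complier (hmono ω)
  rw [hY, hY, hD, hD, Ex_sub_Ex_eq_sum_ite p fun ω h => hexcl ω (noncomplier ω h),
    Ex_sub_Ex_eq_sum_ite p fun ω h => by rw [noncomplier ω h], CE, Pr]
  congr 1
  exact sum_congr rfl fun ω _ => by split_ifs with hC <;> simp_all

/-- under randomization of `Z` (independence from compliance behavior and
all potential outcomes), monotonicity, the exclusion restriction and `P(complier) > 0`,
the complier average causal effect equals the Wald ratio
`(E[Y|Z=1] − E[Y|Z=0]) / (E[D|Z=1] − E[D|Z=0])`, provided the denominator is nonzero. -/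
theorem stmt3 {Ω : Type*} [Fintype Ω] (p : Ω → ℝ)
    (hp : ∀ ω, 0 ≤ p ω) (hsum : ∑ ω, p ω = 1)
    (Z : Ω → Bool) (D : Bool → Ω → Bool) (Y : Bool → Bool → Ω → ℝ)
    (Yobs : Ω → ℝ) (Dobs : Ω → Bool)
    (hZ1 : 0 < Pr p (fun ω => Z ω = true))
    (hZ0 : Pr p (fun ω => Z ω = true) < 1)
    -- randomization: `Z` independent of the joint potential outcomes/compliance map
    (hind : ∀ (b : Bool)
      (A : ((Bool → Bool) × (Bool → Bool → ℝ)) → Prop),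
      Pr p (fun ω => Z ω = b ∧ A (fun z => D z ω, fun z d => Y z d ω)) =
        Pr p (fun ω => Z ω = b) *
          Pr p (fun ω => A (fun z => D z ω, fun z d => Y z d ω)))
    (hmono : ∀ ω, D false ω = true → D true ω = true)
    (hexcl : ∀ ω, D false ω = D true ω →
      Y true (D true ω) ω = Y false (D false ω) ω)
    (hcomp : 0 < Pr p (fun ω => D false ω = false ∧ D true ω = true))
    (hYobs : ∀ ω, Yobs ω = Y (Z ω) (D (Z ω) ω) ω)
    (hDobs : ∀ ω, Dobs ω = D (Z ω) ω)
    (hden : CE p (fun ω => if Dobs ω then (1:ℝ) else 0) (fun ω => Z ω = true) -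
            CE p (fun ω => if Dobs ω then (1:ℝ) else 0) (fun ω => Z ω = false) ≠ 0) :
    CE p (fun ω => Y true (D true ω) ω - Y false (D false ω) ω)
        (fun ω => D false ω = false ∧ D true ω = true) =
      (CE p Yobs (fun ω => Z ω = true) - CE p Yobs (fun ω => Z ω = false)) /
        (CE p (fun ω => if Dobs ω then (1:ℝ) else 0) (fun ω => Z ω = true) -
         CE p (fun ω => if Dobs ω then (1:ℝ) else 0) (fun ω => Z ω = false)) :=
  stmt3_general p hsum Z D Y Yobs Dobs hZ1 hZ0 hind hmono hexcl hYobs hDobs
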